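/- Duality and encoding of session types into C-types: for finite session types T and S, the dual of T equals S if and only if the linear-logic dual of ⟦T⟧_c equals ⟦S⟧_c. -/
import Mathlib


namespace Paper

abbrev Name := ℕ
abbrev Label := ℕ

/-! ## Session π-calculus: syntax -/

inductive SProc : Type where
  | nil : SProc
  | output : Name → Name → SProc → SProc
  | input : Name → Name → SProc → SProc
  | select : Name → Label → SProc → SProc
  | branch : Name → Finset Label → (Label → SProc) → SProc
  | par : SProc → SProc → SProc
  | res : Name → Name → SProc → SProc

namespace SProc

/-- Free names. -/
def fn : SProc → Set Name
  | nil => ∅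
  | output x v P => {x, v} ∪ P.fn
  | input x y P => {x} ∪ (P.fn \ {y})
  | select x _ P => {x} ∪ P.fn
  | branch x I Ps => {x} ∪ ⋃ i ∈ I, (Ps i).fn
  | par P Q => P.fn ∪ Q.fn
  | res x y P => P.fn \ {x, y}

/-- Renaming of a single name. -/
def rn (v z a : Name) : Name := if a = z then v else a

/-- Substitution `P[v/z]` of the name `v` for the name `z`. -/
def subst (v z : Name) : SProc → SProc
  | nil => nil
  | output x w P => output (rn v z x) (rn v z w) (P.subst v z)
  | input x y P => input (rn v z x) y (if y = z then P else P.subst v z)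
  | select x l P => select (rn v z x) l (P.subst v z)
  | branch x I Ps => branch (rn v z x) I (fun i => (Ps i).subst v z)
  | par P Q => par (P.subst v z) (Q.subst v z)
  | res a b P => res a b (if z = a ∨ z = b then P else P.subst v z)

end SProc

/-- Structural congruence for the session π-calculus. -/
inductive SC : SProc → SProc → Prop where
  | refl (P) : SC P P
  | symm : SC P Q → SC Q P
  | trans : SC P Q → SC Q R → SC P R
  | parComm (P Q) : SC (.par P Q) (.par Q P)
  | parAssoc (P Q R) : SC (.par (.par P Q) R) (.par P (.par Q R))
  | parNil (P) : SC (.par P .nil) P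
  | resPar (x y : Name) (P Q) : x ∉ Q.fn → y ∉ Q.fn →
      SC (.par (.res x y P) Q) (.res x y (.par P Q))
  | resNil (x y) : SC (.res x y .nil) .nil
  | resComm (x y a b P) : SC (.res x y (.res a b P)) (.res a b (.res x y P))
  | parCong : SC P P' → SC Q Q' → SC (.par P Q) (.par P' Q')
  | resCong (x y) : SC P Q → SC (.res x y P) (.res x y Q)

/-- Reduction for the session π-calculus. -/
inductive SRed : SProc → SProc → Prop where
  | com (x y v z : Name) (P Q) :
      SRed (.res x y (.par (.output x v P) (.input y z Q)))
           (.res x y (.par P (Q.subst v z)))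
  | case (x y : Name) (j : Label) (I : Finset Label) (P) (Ps : Label → SProc) :
      j ∈ I →
      SRed (.res x y (.par (.select x j P) (.branch y I Ps)))
           (.res x y (.par P (Ps j)))
  | par : SRed P Q → SRed (.par P R) (.par Q R)
  | res (x y) : SRed P Q → SRed (.res x y P) (.res x y Q)
  | str : SC P P' → SRed P' Q' → SC Q' Q → SRed P Q

/-! ## Session types -/

inductive SType : Type where
  | endT : SType
  | recv : SType → SType → SType        -- ?T.S
  | send : SType → SType → SType        -- !T.S
  | branchT : Finset Label → (Label → SType) → SType   -- &{l_i : S_i}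
  | selectT : Finset Label → (Label → SType) → SType   -- ⊕{l_i : S_i}

/-- Session type duality. -/
def SType.dual : SType → SType
  | .endT => .endT
  | .recv T S => .send T S.dual
  | .send T S => .recv T S.dual
  | .branchT I S => .selectT I (fun i => (S i).dual)
  | .selectT I S => .branchT I (fun i => (S i).dual)

/-- Session typing contexts. -/
abbrev Ctx := Name → Option SType

def Ctx.update (Γ : Ctx) (x : Name) (T : Option SType) : Ctx :=
  fun y => if y = x then T else Γ y

/-- The context splitting operation Γ = Γ₁ ∘ Γ₂: every assignment goes to exactly one side. -/
def Ctx.split (Γ Γ₁ Γ₂ : Ctx) : Prop :=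
  ∀ x, (Γ₁ x = Γ x ∧ Γ₂ x = none) ∨ (Γ₂ x = Γ x ∧ Γ₁ x = none)

/-- A context in which every declared channel has the terminated type `end`. -/
def Ctx.terminated (Γ : Ctx) : Prop := ∀ x T, Γ x = some T → T = SType.endT

/-- Vasconcelos' session typing judgement Γ ⊢_ST P. -/
inductive STyped : Ctx → SProc → Prop where
  | nil : Ctx.terminated Γ → STyped Γ .nil
  | par : Ctx.split Γ Γ₁ Γ₂ → STyped Γ₁ P → STyped Γ₂ Q → STyped Γ (.par P Q)
  | res (x y : Name) (T : SType) : Γ x = none → Γ y = none → x ≠ y →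
      STyped ((Γ.update x (some T)).update y (some T.dual)) P →
      STyped Γ (.res x y P)
  | input (x y : Name) (T S : SType) :
      Γ x = some (.recv T S) → y ≠ x → Γ y = none →
      STyped ((Γ.update x (some S)).update y (some T)) P →
      STyped Γ (.input x y P)
  | output (x v : Name) (T S : SType) :
      Γ x = some (.send T S) → v ≠ x → Γ v = some T →
      STyped ((Γ.update x (some S)).update v none) P →
      STyped Γ (.output x v P)
  | select (x : Name) (j : Label) (I : Finset Label) (S : Label → SType) :
      Γ x = some (.selectT I S) → j ∈ I →
      STyped (Γ.update x (some (S j))) P →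
      STyped Γ (.select x j P)
  | branch (x : Name) (I : Finset Label) (S : Label → SType) (Ps : Label → SProc) :
      Γ x = some (.branchT I S) →
      (∀ i ∈ I, STyped (Γ.update x (some (S i))) (Ps i)) →
      STyped Γ (.branch x I Ps)

/-! ## Well-formedness -/

/-- A sequence of double restrictions (ν x̃ỹ). -/
def resSeq : List (Name × Name) → SProc → SProc
  | [], P => P
  | (x, y) :: L, P => .res x y (resSeq L P)

inductive PrefixKind : Type where
  | inp | out | sel | bra

/-- The subject and kind of the topmost prefix of a process, if any. -/
def SProc.prefixKind : SProc → Option (Name × PrefixKind)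
  | .output x _ _ => some (x, .out)
  | .input x _ _ => some (x, .inp)
  | .select x _ _ => some (x, .sel)
  | .branch x _ _ => some (x, .bra)
  | _ => none

/-- Well-formedness for session processes (Definition of well-formed processes). -/
def WellFormed (Rp : SProc) : Prop :=
  ∀ (L : List (Name × Name)) (P Q : SProc), SC Rp (resSeq L (.par P Q)) →
    (∀ x kP kQ, P.prefixKind = some (x, kP) → Q.prefixKind = some (x, kQ) → kP = kQ) ∧
    (∀ x y kP kQ, (x, y) ∈ L →
      P.prefixKind = some (x, kP) → Q.prefixKind = some (y, kQ) →
      ∃ R', SRed (.par P Q) R')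

end Paper

namespace Paper

/-! ## Linear-logic session calculus (Caires-style, classical LL with mix) -/

inductive LProc : Type where
  | nil : LProc
  | output : Name → Name → LProc → LProc          -- free output x̄⟨v⟩.P
  | input : Name → Name → LProc → LProc           -- x(y).P
  | select : Name → Label → LProc → LProc         -- x ◁ l.P
  | branch : Name → Finset Label → (Label → LProc) → LProc  -- x ▷ {l_i : P_i}
  | par : LProc → LProc → LProc
  | res : Name → LProc → LProc                    -- (νx)P
  | fwd : Name → Name → LProc                     -- forwarder [x↔y]

namespace LProc

def fn : LProc → Set Name
  | nil => ∅
  | output x v P => {x, v} ∪ P.fn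
  | input x y P => {x} ∪ (P.fn \ {y})
  | select x _ P => {x} ∪ P.fn
  | branch x I Ps => {x} ∪ ⋃ i ∈ I, (Ps i).fn
  | par P Q => P.fn ∪ Q.fn
  | res x P => P.fn \ {x}
  | fwd x y => {x, y}

/-- Substitution `P[v/z]` of the name `v` for the name `z`. -/
def subst (v z : Name) : LProc → LProc
  | nil => nil
  | output x w P => output (SProc.rn v z x) (SProc.rn v z w) (P.subst v z)
  | input x y P => input (SProc.rn v z x) y (if y = z then P else P.subst v z)
  | select x l P => select (SProc.rn v z x) l (P.subst v z)
  | branch x I Ps => branch (SProc.rn v z x) I (fun i => (Ps i).subst v z)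
  | par P Q => par (P.subst v z) (Q.subst v z)
  | res a P => res a (if z = a then P else P.subst v z)
  | fwd x y => fwd (SProc.rn v z x) (SProc.rn v z y)

/-- Bound output x̄(y).P ≜ (νy)x̄⟨y⟩.P. -/
def bout (x y : Name) (P : LProc) : LProc := res y (output x y P)

end LProc

/-- Structural congruence. -/
inductive LSC : LProc → LProc → Prop where
  | refl (P) : LSC P P
  | symm : LSC P Q → LSC Q P
  | trans : LSC P Q → LSC Q R → LSC P R
  | parComm (P Q) : LSC (.par P Q) (.par Q P)
  | parAssoc (P Q R) : LSC (.par (.par P Q) R) (.par P (.par Q R))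
  | parNil (P) : LSC (.par P .nil) P
  | resPar (x : Name) (P Q) : x ∉ Q.fn → LSC (.par (.res x P) Q) (.res x (.par P Q))
  | resNil (x) : LSC (.res x .nil) .nil
  | resComm (x y P) : LSC (.res x (.res y P)) (.res y (.res x P))
  | fwdComm (x y) : LSC (.fwd x y) (.fwd y x)
  | parCong : LSC P P' → LSC Q Q' → LSC (.par P Q) (.par P' Q')
  | resCong (x) : LSC P Q → LSC (.res x P) (.res x Q)

/-- Reduction for the linear-logic session calculus. -/
inductive LRed : LProc → LProc → Prop where
  | com (x v z : Name) (P Q) :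
      LRed (.par (.output x v P) (.input x z Q)) (.par P (Q.subst v z))
  | case (x : Name) (j : Label) (I : Finset Label) (P) (Ps : Label → LProc) :
      j ∈ I → LRed (.par (.select x j P) (.branch x I Ps)) (.par P (Ps j))
  | fwd (x y : Name) (P) :
      LRed (.res x (.par (.fwd x y) P)) (P.subst y x)
  | par : LRed P Q → LRed (.par P R) (.par Q R)
  | res (x) : LRed P Q → LRed (.res x P) (.res x Q)
  | str : LSC P P' → LRed P' Q' → LSC Q' Q → LRed P Q

/-! ## C-types: classical linear logic propositions with mix (⊥ = 1 = •) -/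

inductive CType : Type where
  | unit : CType                                   -- •
  | tensor : CType → CType → CType                 -- A ⊗ B
  | parr : CType → CType → CType                   -- A ⅋ B
  | cselect : Finset Label → (Label → CType) → CType  -- ⊕{l_i : A_i}
  | cbranch : Finset Label → (Label → CType) → CType  -- &{l_i : A_i}

/-- Linear logic duality (negation). -/
def CType.dual : CType → CType
  | .unit => .unit
  | .tensor A B => .parr A.dual B.dual
  | .parr A B => .tensor A.dual B.dual
  | .cselect I A => .cbranch I (fun i => (A i).dual)
  | .cbranch I A => .cselect I (fun i => (A i).dual)

abbrev LCtx := Name → Option CType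

def LCtx.update (Δ : LCtx) (x : Name) (A : Option CType) : LCtx :=
  fun y => if y = x then A else Δ y

/-- Δ is the disjoint union of Δ₁ and Δ₂. -/
def LCtx.isJoin (Δ Δ₁ Δ₂ : LCtx) : Prop :=
  ∀ x, (Δ₁ x = Δ x ∧ Δ₂ x = none) ∨ (Δ₂ x = Δ x ∧ Δ₁ x = none)

def LCtx.empty : LCtx := fun _ => none

/-- The typing judgement P ⊢_CH Δ of the classical linear logic
interpretation of session types, with mix. -/
inductive CHTyped : LProc → LCtx → Prop where
  | nil : (∀ x A, Δ x = some A → A = CType.unit) → CHTyped .nil Δ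
  | fwd (x y : Name) (A : CType) : x ≠ y →
      Δ = (LCtx.empty.update x (some A)).update y (some A.dual) →
      CHTyped (.fwd x y) Δ
  | cut (x : Name) (A : CType) :
      LCtx.isJoin Δ Δ₁ Δ₂ → Δ₁ x = none → Δ₂ x = none → Δ x = none →
      CHTyped P (Δ₁.update x (some A)) → CHTyped Q (Δ₂.update x (some A.dual)) →
      CHTyped (.res x (.par P Q)) Δ
  | mix : LCtx.isJoin Δ Δ₁ Δ₂ → CHTyped P Δ₁ → CHTyped Q Δ₂ → CHTyped (.par P Q) Δ
  | tensor (x y : Name) (A B : CType) :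
      LCtx.isJoin Δ Δ₁ Δ₂ → Δ x = none → Δ₁ y = none → Δ₂ y = none → y ≠ x →
      CHTyped P (Δ₁.update y (some A)) → CHTyped Q (Δ₂.update x (some B)) →
      CHTyped (LProc.bout x y (.par P Q)) (Δ.update x (some (.tensor A B)))
  | parr {Δ : LCtx} (x y : Name) (A B : CType) :
      Δ x = none → Δ y = none → y ≠ x →
      CHTyped P ((Δ.update x (some B)).update y (some A)) →
      CHTyped (.input x y P) (Δ.update x (some (.parr A B)))
  | cselect {Δ : LCtx} (x : Name) (j : Label) (I : Finset Label) (A : Label → CType) :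
      Δ x = none → j ∈ I →
      CHTyped P (Δ.update x (some (A j))) →
      CHTyped (.select x j P) (Δ.update x (some (.cselect I A)))
  | cbranch {Δ : LCtx} (x : Name) (I : Finset Label) (A : Label → CType) (Ps : Label → LProc) :
      Δ x = none →
      (∀ i ∈ I, CHTyped (Ps i) (Δ.update x (some (A i)))) →
      CHTyped (.branch x I Ps) (Δ.update x (some (.cbranch I A)))

/-! ## Liveness -/

def resSeqL : List Name → LProc → LProc
  | [], P => P
  | x :: L, P => .res x (resSeqL L P)

/-- A process is a (communication) prefix π.Q. -/
def LProc.isPrefixed : LProc → Prop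
  | .output _ _ _ => True
  | .input _ _ _ => True
  | .select _ _ _ => True
  | .branch _ _ _ => True
  | _ => False

/-- live(P) iff P ≡ (ν ñ)(π.Q | R) for a prefix π. -/
def live (P : LProc) : Prop :=
  ∃ (L : List Name) (π R : LProc), π.isPrefixed ∧ LSC P (resSeqL L (.par π R))

end Paper

namespace Paper

/-! ## Encoding of session types into C-types -/

mutual
/-- The encoding ⟦·⟧_c of session types into C-types. -/
def encC : SType → CType
  | .endT => .unit
  | .recv T S => .parr (encC T) (encC S)
  | .send T S => .tensor (encCd T) (encC S)
  | .branchT I S => .cbranch I (fun i => encC (S i))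
  | .selectT I S => .cselect I (fun i => encC (S i))

/-- `encCd T` is ⟦T̄⟧_c, the encoding of the dual of `T`. -/
def encCd : SType → CType
  | .endT => .unit
  | .recv T S => .tensor (encCd T) (encCd S)
  | .send T S => .parr (encC T) (encCd S)
  | .branchT I S => .cselect I (fun i => encCd (S i))
  | .selectT I S => .cbranch I (fun i => encCd (S i))
end

/-- Pointwise encoding ⟦Γ⟧_c of a session typing context into a C-typing context. -/
def encCtxC (Γ : Ctx) : LCtx := fun x => (Γ x).map encC

end Paper

namespace Paper

theorem CType.dual_dual (A : CType) : A.dual.dual = A := by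
  induction A with
  | unit => rfl
  | tensor A B ihA ihB => simp [CType.dual, ihA, ihB]
  | parr A B ihA ihB => simp [CType.dual, ihA, ihB]
  | cselect I f ih => simp only [CType.dual]; exact congrArg _ (funext ih)
  | cbranch I f ih => simp only [CType.dual]; exact congrArg _ (funext ih)

/-- `encCd` is the encoding of the dual. -/
theorem encCd_eq_encC_dual (T : SType) : encCd T = encC T.dual := by
  induction T with
  | endT => rfl
  | recv A B _ ihB => simp [encC, encCd, SType.dual, ihB]
  | send A B _ ihB => simp [encC, encCd, SType.dual, ihB]
  | branchT I S ih => simp only [encC, encCd, SType.dual]; exact congrArg _ (funext ih)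
  | selectT I S ih => simp only [encC, encCd, SType.dual]; exact congrArg _ (funext ih)

/-- Linear-logic duality commutes with the encoding. -/
theorem dual_encC (T : SType) : (encC T).dual = encCd T := by
  induction T with
  | endT => rfl
  | recv A B ihA ihB => simp [encC, encCd, CType.dual, ihA, ihB]
  | send A B ihA ihB =>
      simp only [encC, encCd, CType.dual, ihB]
      rw [encCd_eq_encC_dual] at ihA ⊢
      rw [← ihA]
      simp [CType.dual_dual]
  | branchT I S ih => simp only [encC, encCd, CType.dual]; exact congrArg _ (funext ih)
  | selectT I S ih => simp only [encC, encCd, CType.dual]; exact congrArg _ (funext ih)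

theorem encC_encCd_inj (T : SType) : ∀ U : SType,
    (encC T = encC U → T = U) ∧ (encCd T = encCd U → T = U) := by
  induction T with
  | endT => intro U; cases U <;> simp [encC, encCd]
  | recv A B ihA ihB =>
      intro U; cases U <;> constructor <;> intro h <;> simp only [encC, encCd] at h <;>
        first
          | (injection h with h1 h2; rw [(ihA _).1 h1, (ihB _).1 h2])
          | (injection h with h1 h2; rw [(ihA _).2 h1, (ihB _).2 h2])
          | simp at h
  | send A B ihA ihB =>
      intro U; cases U <;> constructor <;> intro h <;> simp only [encC, encCd] at h <;>
        first
          | (injection h with h1 h2; rw [(ihA _).2 h1, (ihB _).1 h2])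
          | (injection h with h1 h2; rw [(ihA _).1 h1, (ihB _).2 h2])
          | simp at h
  | branchT I S ih =>
      intro U; cases U <;> constructor <;> intro h <;> simp only [encC, encCd] at h <;>
        first
          | (injection h with h1 h2; subst h1; congr 1; funext i; exact (ih i _).1 (congrFun h2 i))
          | (injection h with h1 h2; subst h1; congr 1; funext i; exact (ih i _).2 (congrFun h2 i))
          | simp at h
  | selectT I S ih =>
      intro U; cases U <;> constructor <;> intro h <;> simp only [encC, encCd] at h <;>
        first
          | (injection h with h1 h2; subst h1; congr 1; funext i; exact (ih i _).1 (congrFun h2 i))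
          | (injection h with h1 h2; subst h1; congr 1; funext i; exact (ih i _).2 (congrFun h2 i))
          | simp at h

/-- Duality and encoding of session types into C-types:
for finite session types T, S: T̄ = S iff ⟦T⟧_c⊥ = ⟦S⟧_c. -/
theorem duality_enc_ctypes (T S : SType) :
    T.dual = S ↔ (encC T).dual = encC S := by
  rw [dual_encC, encCd_eq_encC_dual]
  exact ⟨fun h => h ▸ rfl, fun h => (encC_encCd_inj T.dual S).1 h⟩

end Paper
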